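/- Let (Ω, F, (F_t)_{t≥0}, P) be a filtered probability space and let X : [0,∞) × Ω → [0,∞) be a stochastic process such that each X_n (n ∈ ℕ) is integrable, almost every sample path t ↦ X_t(ω) is nonincreasing, and X_0 is F_0-measurable with X_0 > 0 almost surely. Suppose there is δ ∈ (0,1) such that E[X_n | F_0] ≤ δⁿ X_0 almost surely for every n ∈ ℕ, and set λ' = −(1/2) log δ. Then for every λ ∈ (0, λ') and every p ≥ 1 with 2λp + 2(λ − λ') < 0, there exists a random variable C : Ω → [0,∞) with E[C^p] < ∞ such that almost surely X_t ≤ C e^{−2λ t} X_0 for all t ≥ 0. -/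

import Mathlib

open MeasureTheory

private lemma integrable_indicator_aux {Ω : Type*} [mm : MeasurableSpace Ω] {μ : Measure Ω}
    {f : Ω → ℝ} {s : Set Ω} (hf : Integrable f μ) (hs : MeasurableSet s) :
    Integrable (s.indicator f) μ := hf.indicator hs

private lemma integral_indicator_one_aux {Ω : Type*} [mm : MeasurableSpace Ω] (μ : Measure Ω)
    {s : Set Ω} (hs : MeasurableSet s) :
    ∫ ω, s.indicator (fun _ => (1 : ℝ)) ω ∂μ = (μ s).toReal := by
  rw [integral_indicator_const (1 : ℝ) hs, smul_eq_mul, mul_one]; rfl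

set_option maxHeartbeats 1600000 in
/-- Abstract probabilistic engine of the enhanced dissipation theorem: the one-step mean
contraction `E[X_n | F_0] ≤ δⁿ X_0` of a pathwise nonincreasing nonnegative process yields
almost sure exponential decay `X_t ≤ C e^{−2λt} X_0` at any rate `2λ < 2λ' = −log δ`,
with a random prefactor `C` having finite `p`-th moment. -/
theorem almost_sure_exponential_decay_with_moment_prefactor
    {Ω : Type*} {m : MeasurableSpace Ω} {μ : Measure Ω} [IsProbabilityMeasure μ]
    (𝒢 : MeasurableSpace Ω) (h𝒢 : 𝒢 ≤ m)
    (X : ℝ → Ω → ℝ)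
    (hXnn : ∀ t ω, 0 ≤ X t ω)
    (hXint : ∀ n : ℕ, Integrable (X (n : ℝ)) μ)
    (hmono : ∀ᵐ ω ∂μ, ∀ s t : ℝ, s ≤ t → X t ω ≤ X s ω)
    (hX0meas : Measurable[𝒢] (X 0))
    (hX0pos : ∀ᵐ ω ∂μ, 0 < X 0 ω)
    (δ : ℝ) (hδ : δ ∈ Set.Ioo (0 : ℝ) 1)
    (hcontr : ∀ n : ℕ, ∀ᵐ ω ∂μ, (μ[X (n : ℝ)|𝒢]) ω ≤ δ ^ n * X 0 ω)
    (lam : ℝ) (hlam0 : 0 < lam) (hlam : lam < -(1 / 2) * Real.log δ)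
    (p : ℝ) (hp : 1 ≤ p)
    (hplam : 2 * lam * p + 2 * (lam - (-(1 / 2) * Real.log δ)) < 0) :
    ∃ C : Ω → ℝ, (∀ ω, 0 ≤ C ω) ∧ Integrable (fun ω => C ω ^ p) μ ∧
      ∀ᵐ ω ∂μ, ∀ t : ℝ, 0 ≤ t →
        X t ω ≤ C ω * Real.exp (-2 * lam * t) * X 0 ω := by
  classical
  obtain ⟨hδ0, hδ1⟩ := hδ
  haveI : SigmaFinite (μ.trim h𝒢) := (isFiniteMeasure_trim h𝒢).toSigmaFinite
  -- measurable versions of X n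
  have hXm : ∀ n : ℕ, AEStronglyMeasurable[m] (X (n : ℝ)) μ := fun n => (hXint n).1
  set Y : ℕ → Ω → ℝ := fun n => (hXm n).mk _ with hYdef
  have hYsm : ∀ n, StronglyMeasurable[m] (Y n) := fun n => (hXm n).stronglyMeasurable_mk
  have hXY : ∀ n : ℕ, X (n : ℝ) =ᵐ[μ] Y n := fun n => (hXm n).ae_eq_mk
  have hX0m : Measurable[m] (X 0) := hX0meas.mono h𝒢 le_rfl
  have hX0int : Integrable (X 0) μ := by simpa using hXint 0
  -- the bad events
  set A : ℕ → Set Ω := fun n => {ω | Real.exp (-(2 * lam) * n) * X 0 ω < Y n ω} with hAdef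
  have hA : ∀ n, MeasurableSet[m] (A n) := fun n =>
    measurableSet_lt (measurable_const.mul hX0m) (hYsm n).measurable
  -- parameters
  set r : ℝ := δ * Real.exp (2 * lam) with hrdef
  have hr0 : 0 < r := by positivity
  have hr1 : r < 1 := by
    have h2 : Real.log δ + 2 * lam < 0 := by nlinarith
    have : r = Real.exp (Real.log δ + 2 * lam) := by
      rw [Real.exp_add, Real.exp_log hδ0]
    rw [this, ← Real.exp_zero]
    exact Real.exp_lt_exp.2 h2
  set q : ℝ := Real.exp (2 * lam) with hqdef
  have hq1 : 1 < q := by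
    rw [hqdef, ← Real.exp_zero]
    exact Real.exp_lt_exp.2 (by linarith)
  set ρ : ℝ := δ * Real.exp (2 * lam * p + 2 * lam) with hρdef
  have hρ0 : 0 ≤ ρ := by positivity
  have hρ1 : ρ < 1 := by
    have h2 : Real.log δ + (2 * lam * p + 2 * lam) < 0 := by nlinarith
    have : ρ = Real.exp (Real.log δ + (2 * lam * p + 2 * lam)) := by
      rw [Real.exp_add, Real.exp_log hδ0]
    rw [this, ← Real.exp_zero]
    exact Real.exp_lt_exp.2 h2
  -- measure of the bad events
  have hmeasA : ∀ n : ℕ, (μ (A n)).toReal ≤ r ^ n := by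
    intro n
    set g : Ω → ℝ := (A n).indicator (fun _ => (1 : ℝ)) with hgdef
    have hg_int : Integrable g μ := integrable_indicator_aux (mm := m) (integrable_const (1 : ℝ)) (hA n)
    have hfg_eq : (X 0 * g) = (A n).indicator (X 0) := by
      funext ω
      by_cases h : ω ∈ A n <;>
        simp [hgdef, Set.indicator_of_mem, Set.indicator_of_notMem, h]
    have hfg_int : Integrable (X 0 * g) μ := by
      rw [hfg_eq]; exact integrable_indicator_aux (mm := m) hX0int (hA n)
    have hpull : μ[X 0 * g|𝒢] =ᵐ[μ] X 0 * μ[g|𝒢] :=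
      condExp_mul_of_stronglyMeasurable_left hX0meas.stronglyMeasurable hfg_int hg_int
    have hle1 : (X 0 * g) ≤ᵐ[μ] (Real.exp (2 * lam * n) • X (n : ℝ)) := by
      filter_upwards [hXY n] with ω hω
      simp only [Pi.mul_apply, Pi.smul_apply, smul_eq_mul]
      by_cases h : ω ∈ A n
      · have h1 : Real.exp (-(2 * lam) * n) * X 0 ω < Y n ω := h
        have hE : Real.exp (2 * lam * n) * Real.exp (-(2 * lam) * n) = 1 := by
          rw [← Real.exp_add]
          have : 2 * lam * (n : ℝ) + -(2 * lam) * n = 0 := by ring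
          rw [this, Real.exp_zero]
        have h2 : X 0 ω < Real.exp (2 * lam * n) * Y n ω := by
          have h3 := mul_lt_mul_of_pos_left h1 (Real.exp_pos (2 * lam * (n : ℝ)))
          calc X 0 ω = Real.exp (2 * lam * n) * Real.exp (-(2 * lam) * n) * X 0 ω := by
                rw [hE]; ring
            _ = Real.exp (2 * lam * n) * (Real.exp (-(2 * lam) * n) * X 0 ω) := by ring
            _ < Real.exp (2 * lam * n) * Y n ω := h3
        simp only [hgdef, Set.indicator_of_mem h]
        rw [hω]
        linarith
      · simp only [hgdef, Set.indicator_of_notMem h, mul_zero]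
        exact mul_nonneg (Real.exp_pos _).le (hXnn _ _)
    have hcond1 : μ[X 0 * g|𝒢] ≤ᵐ[μ] μ[Real.exp (2 * lam * n) • X (n : ℝ)|𝒢] :=
      condExp_mono hfg_int ((hXint n).smul _) hle1
    have hsmul : μ[Real.exp (2 * lam * n) • X (n : ℝ)|𝒢]
        =ᵐ[μ] Real.exp (2 * lam * n) • μ[X (n : ℝ)|𝒢] :=
      condExp_smul (Real.exp (2 * lam * n)) (X (n : ℝ)) 𝒢
    have hgbound : ∀ᵐ ω ∂μ, (μ[g|𝒢]) ω ≤ r ^ n := by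
      filter_upwards [hpull, hcond1, hsmul, hcontr n, hX0pos] with ω h1 h2 h3 h4 h5
      have hEn : Real.exp (2 * lam * (n : ℝ)) = q ^ n := by
        rw [hqdef, show (2 * lam * (n : ℝ)) = (n : ℝ) * (2 * lam) by ring, Real.exp_nat_mul]
      have hrn : r ^ n = Real.exp (2 * lam * (n : ℝ)) * δ ^ n := by
        rw [hrdef, mul_pow, hEn]; ring
      have key : X 0 ω * (μ[g|𝒢]) ω ≤ r ^ n * X 0 ω := by
        have e1 : X 0 ω * (μ[g|𝒢]) ω = (μ[X 0 * g|𝒢]) ω := by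
          have := h1.symm; simpa using this
        rw [e1]
        calc (μ[X 0 * g|𝒢]) ω ≤ (μ[Real.exp (2 * lam * n) • X (n : ℝ)|𝒢]) ω := h2
          _ = Real.exp (2 * lam * n) * (μ[X (n : ℝ)|𝒢]) ω := by simpa using h3
          _ ≤ Real.exp (2 * lam * n) * (δ ^ n * X 0 ω) :=
              mul_le_mul_of_nonneg_left h4 (Real.exp_pos _).le
          _ = r ^ n * X 0 ω := by rw [hrn]; ring
      by_contra hcon
      push_neg at hcon
      nlinarith [mul_lt_mul_of_pos_left hcon h5]
    have h5 : ∫ ω, (μ[g|𝒢]) ω ∂μ ≤ ∫ _ω, r ^ n ∂μ :=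
      integral_mono_ae integrable_condExp (integrable_const _) hgbound
    rw [integral_condExp h𝒢] at h5
    have h6 : ∫ ω, g ω ∂μ = (μ (A n)).toReal :=
      integral_indicator_one_aux (mm := m) μ (hA n)
    have h7 : (∫ _ω, r ^ n ∂μ) = r ^ n := by simp
    rw [h6, h7] at h5
    exact h5
  have hmeasA' : ∀ n : ℕ, μ (A n) ≤ ENNReal.ofReal (r ^ n) := fun n =>
    (ENNReal.le_ofReal_iff_toReal_le (measure_ne_top μ _) (by positivity)).2 (hmeasA n)
  -- the random series
  set a : ℕ → ℝ := fun n => Real.exp (2 * lam * n) with hadef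
  set b : ℕ → ℝ := fun n => Real.exp ((2 * lam * p) * n) with hbdef
  have ha_pos : ∀ n, 0 < a n := fun n => Real.exp_pos _
  have hb_pos : ∀ n, 0 < b n := fun n => Real.exp_pos _
  have hab : ∀ n, a n ≤ b n := by
    intro n
    have h0 : (0 : ℝ) ≤ 2 * lam * n := by positivity
    exact Real.exp_le_exp.2 (by nlinarith [mul_le_mul_of_nonneg_right hp h0])
  have haq : ∀ n : ℕ, a n = q ^ n := by
    intro n
    show Real.exp (2 * lam * (n : ℝ)) = Real.exp (2 * lam) ^ n
    rw [show (2 * lam * (n : ℝ)) = (n : ℝ) * (2 * lam) by ring, Real.exp_nat_mul]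
  set S' : Ω → ENNReal := fun ω => ∑' n : ℕ, (A n).indicator (fun _ => ENNReal.ofReal (a n)) ω
    with hS'def
  set T' : Ω → ENNReal := fun ω => ∑' n : ℕ, (A n).indicator (fun _ => ENNReal.ofReal (b n)) ω
    with hT'def
  have haapp : ∀ n : ℕ, a n = Real.exp (2 * lam * n) := fun n => rfl
  have hbapp : ∀ n : ℕ, b n = Real.exp (2 * lam * p * n) := fun n => rfl
  have hS'app : ∀ ω, S' ω = ∑' n : ℕ, (A n).indicator (fun _ => ENNReal.ofReal (a n)) ω :=
    fun ω => rfl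
  have hT'app : ∀ ω, T' ω = ∑' n : ℕ, (A n).indicator (fun _ => ENNReal.ofReal (b n)) ω :=
    fun ω => rfl
  have hS'm : Measurable[m] S' :=
    Measurable.ennreal_tsum fun n => measurable_const.indicator (hA n)
  have hT'm : Measurable[m] T' :=
    Measurable.ennreal_tsum fun n => measurable_const.indicator (hA n)
  have hS'T' : ∀ ω, S' ω ≤ T' ω := fun ω => by
    refine ENNReal.tsum_le_tsum fun n => ?_
    by_cases h : ω ∈ A n <;>
      simp [Set.indicator_of_mem, Set.indicator_of_notMem, h, ENNReal.ofReal_le_ofReal (hab n)]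
  have hbr : ∀ n : ℕ, b n * r ^ n = ρ ^ n := by
    intro n
    have e1 : Real.exp (2 * lam) ^ n = Real.exp ((n : ℝ) * (2 * lam)) :=
      (Real.exp_nat_mul _ n).symm
    have e2 : Real.exp (2 * lam * p + 2 * lam) ^ n
        = Real.exp ((n : ℝ) * (2 * lam * p + 2 * lam)) := (Real.exp_nat_mul _ n).symm
    have e3 : (2 * lam * p) * (n : ℝ) + (n : ℝ) * (2 * lam)
        = (n : ℝ) * (2 * lam * p + 2 * lam) := by ring
    rw [hbapp n, hrdef, hqdef, hρdef, mul_pow, mul_pow, e1, e2,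
      show (2 * lam * p * (n : ℝ)) = (2 * lam * p) * (n : ℝ) from rfl, ← mul_assoc,
      show Real.exp ((2 * lam * p) * n) * δ ^ n = δ ^ n * Real.exp ((2 * lam * p) * n) from
        mul_comm _ _, mul_assoc, ← Real.exp_add, e3]
  have hT'li : ∫⁻ ω, T' ω ∂μ ≤ ENNReal.ofReal (∑' n : ℕ, ρ ^ n) := by
    simp_rw [hT'app]
    rw [lintegral_tsum fun n => (measurable_const.indicator (hA n)).aemeasurable]
    calc ∑' n : ℕ, ∫⁻ ω, (A n).indicator (fun _ => ENNReal.ofReal (b n)) ω ∂μ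
        = ∑' n : ℕ, ENNReal.ofReal (b n) * μ (A n) := by
          refine tsum_congr fun n => ?_
          rw [lintegral_indicator_const (hA n)]
      _ ≤ ∑' n : ℕ, ENNReal.ofReal (b n) * ENNReal.ofReal (r ^ n) :=
          ENNReal.tsum_le_tsum fun n => mul_le_mul_right (hmeasA' n) _
      _ = ∑' n : ℕ, ENNReal.ofReal (ρ ^ n) := by
          refine tsum_congr fun n => ?_
          rw [← ENNReal.ofReal_mul (hb_pos n).le, hbr n]
      _ = ENNReal.ofReal (∑' n : ℕ, ρ ^ n) :=
          (ENNReal.ofReal_tsum_of_nonneg (fun n => by positivity)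
            (summable_geometric_of_lt_one hρ0 hρ1)).symm
  have hT'fin : ∫⁻ ω, T' ω ∂μ ≠ ⊤ := (lt_of_le_of_lt hT'li ENNReal.ofReal_lt_top).ne
  set T : Ω → ℝ := fun ω => (T' ω).toReal with hTdef
  have hTapp : ∀ ω, T ω = (T' ω).toReal := fun ω => rfl
  have hTint : Integrable T μ :=
    integrable_toReal_of_lintegral_ne_top hT'm.aemeasurable hT'fin
  have hTnn : ∀ ω, 0 ≤ T ω := fun ω => ENNReal.toReal_nonneg
  set S : Ω → ℝ := fun ω => (S' ω).toReal with hSdef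
  have hSapp : ∀ ω, S ω = (S' ω).toReal := fun ω => rfl
  have hSnn : ∀ ω, 0 ≤ S ω := fun ω => ENNReal.toReal_nonneg
  set C : Ω → ℝ := fun ω => Real.exp (4 * lam) * (1 + S ω) with hCdef
  have hCapp : ∀ ω, C ω = Real.exp (4 * lam) * (1 + S ω) := fun ω => rfl
  have hCnn : ∀ ω, 0 ≤ C ω := fun ω =>
    mul_nonneg (Real.exp_pos _).le (by linarith [hSnn ω])
  have hCm : Measurable[m] C :=
    measurable_const.mul (measurable_const.add hS'm.ennreal_toReal)
  clear_value S' T' S T C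
  refine ⟨C, hCnn, ?_, ?_⟩
  · -- integrability of C ^ p
    set K : ℝ := 1 + q / (q - 1) with hKdef
    have hKq : 0 < q / (q - 1) := div_pos (by linarith) (by linarith)
    have hK1 : 1 ≤ K := by rw [hKdef]; linarith
    have hCpm : AEStronglyMeasurable[m] (fun ω => C ω ^ p) μ :=
      ((Real.continuous_rpow_const (by linarith : (0:ℝ) ≤ p)).measurable.comp
        hCm).aestronglyMeasurable
    have hgint : Integrable (fun ω => (Real.exp (4 * lam) * K) ^ p * (1 + T ω)) μ :=
      (((integrable_const (1 : ℝ)).add hTint).const_mul _)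
    refine Integrable.mono' hgint hCpm ?_
    filter_upwards [ae_lt_top hT'm hT'fin] with ω hωT
    rw [Real.norm_eq_abs, abs_of_nonneg (Real.rpow_nonneg (hCnn ω) p)]
    have hbT : ∀ n : ℕ, ω ∈ A n → b n ≤ T ω := by
      intro n hn
      have h1 : ENNReal.ofReal (b n) ≤ T' ω := by
        rw [hT'app ω]
        have h2 := ENNReal.le_tsum
          (f := fun k : ℕ => (A k).indicator (fun _ => ENNReal.ofReal (b k)) ω) n
        simpa [Set.indicator_of_mem hn] using h2
      rw [hTapp ω]
      exact (ENNReal.ofReal_le_iff_le_toReal hωT.ne).1 h1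
    by_cases hF : ∃ n, ω ∈ A n
    · obtain ⟨n₀, hn₀⟩ := hF
      have hlp : 0 < 2 * lam * p := by nlinarith
      have hbound_n : ∀ n : ℕ, ω ∈ A n → (n : ℝ) ≤ T ω / (2 * lam * p) := by
        intro n hn
        have h1 := hbT n hn
        have h2 : (2 * lam * p) * n + 1 ≤ b n := by
          rw [hbapp n]
          have h3 := Real.add_one_le_exp (2 * lam * p * n)
          linarith
        rw [le_div_iff₀ hlp]
        nlinarith
      set M : ℕ := Nat.floor (T ω / (2 * lam * p)) with hM
      have hFsub : ∀ n : ℕ, ω ∈ A n → n ≤ M := fun n hn => Nat.le_floor (hbound_n n hn)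
      set F : Finset ℕ := (Finset.range (M + 1)).filter (fun n => ω ∈ A n) with hFdef
      have hmemF : ∀ n : ℕ, ω ∈ A n → n ∈ F := fun n hn =>
        Finset.mem_filter.2 ⟨Finset.mem_range.2 (Nat.lt_succ_of_le (hFsub n hn)), hn⟩
      have hFne : F.Nonempty := ⟨n₀, hmemF n₀ hn₀⟩
      set N : ℕ := F.max' hFne with hN
      have hNA : ω ∈ A N := (Finset.mem_filter.1 (F.max'_mem hFne)).2
      have hNle : ∀ n : ℕ, ω ∈ A n → n ≤ N := fun n hn => F.le_max' n (hmemF n hn)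
      have hS'sum : S' ω
          = ∑ n ∈ Finset.range (N + 1), (A n).indicator (fun _ => ENNReal.ofReal (a n)) ω := by
        rw [hS'app ω]
        refine tsum_eq_sum fun n hn => ?_
        have hno : ω ∉ A n := fun h => hn (Finset.mem_range.2 (Nat.lt_succ_of_le (hNle n h)))
        simp [Set.indicator_of_notMem hno]
      have hS'le : S' ω ≤ ENNReal.ofReal (∑ n ∈ Finset.range (N + 1), a n) := by
        rw [hS'sum, ENNReal.ofReal_sum_of_nonneg (fun n _ => (ha_pos n).le)]
        refine Finset.sum_le_sum fun n _ => ?_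
        by_cases h : ω ∈ A n <;>
          simp [Set.indicator_of_mem, Set.indicator_of_notMem, h]
      have hSle : S ω ≤ ∑ n ∈ Finset.range (N + 1), a n := by
        rw [hSapp ω]
        exact ENNReal.toReal_le_of_le_ofReal
          (Finset.sum_nonneg fun n _ => (ha_pos n).le) hS'le
      have hgeom : ∑ n ∈ Finset.range (N + 1), a n = (q ^ (N + 1) - 1) / (q - 1) := by
        simp_rw [haq]
        exact geom_sum_eq (by linarith : q ≠ 1) (N + 1)
      have hq0 : (0 : ℝ) < q - 1 := by linarith
      have hqN1 : (1 : ℝ) ≤ q ^ N := one_le_pow₀ hq1.le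
      have hstep : 1 + S ω ≤ K * q ^ N := by
        rw [hgeom] at hSle
        have h2 : (q ^ (N + 1) - 1) / (q - 1) ≤ q ^ (N + 1) / (q - 1) := by
          rw [div_le_div_iff₀ hq0 hq0]
          nlinarith [pow_pos (show (0:ℝ) < q by linarith) (N + 1)]
        have h3 : q ^ (N + 1) / (q - 1) = q / (q - 1) * q ^ N := by
          rw [pow_succ]; ring
        have h4 : K * q ^ N = q ^ N + q / (q - 1) * q ^ N := by rw [hKdef]; ring
        have h5 : q / (q - 1) * 1 ≤ q / (q - 1) * q ^ N :=
          mul_le_mul_of_nonneg_left hqN1 hKq.le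
        rw [h4]
        linarith [hSle, h2, h3, h5, hqN1]
      have hCb : C ω ≤ Real.exp (4 * lam) * K * q ^ N := by
        rw [hCapp ω, mul_assoc]
        exact mul_le_mul_of_nonneg_left hstep (Real.exp_pos (4 * lam)).le
      have h5 : C ω ^ p ≤ (Real.exp (4 * lam) * K * q ^ N) ^ p :=
        Real.rpow_le_rpow (hCnn ω) hCb (by linarith)
      have h6 : (Real.exp (4 * lam) * K * q ^ N) ^ p
          = (Real.exp (4 * lam) * K) ^ p * (q ^ N) ^ p :=
        Real.mul_rpow (by positivity) (by positivity)
      have h7 : ((q : ℝ) ^ N) ^ p = b N := by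
        rw [hqdef, ← Real.exp_nat_mul, ← Real.exp_mul, hbapp N]
        congr 1
        ring
      have h8 : b N ≤ T ω := hbT N hNA
      have h9 : (0 : ℝ) ≤ (Real.exp (4 * lam) * K) ^ p :=
        Real.rpow_nonneg (by positivity) p
      have h10 : (Real.exp (4 * lam) * K) ^ p * b N
          ≤ (Real.exp (4 * lam) * K) ^ p * (1 + T ω) :=
        mul_le_mul_of_nonneg_left (by linarith) h9
      calc C ω ^ p ≤ (Real.exp (4 * lam) * K) ^ p * (q ^ N) ^ p := by rw [← h6]; exact h5
        _ = (Real.exp (4 * lam) * K) ^ p * b N := by rw [h7]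
        _ ≤ (Real.exp (4 * lam) * K) ^ p * (1 + T ω) := h10
    · push_neg at hF
      have hS0 : S' ω = 0 := by
        rw [hS'app ω]
        have hz : ∀ n : ℕ, (A n).indicator (fun _ => ENNReal.ofReal (a n)) ω = 0 := fun n =>
          Set.indicator_of_notMem (hF n) _
        simp only [hz, tsum_zero]
      have hCval : C ω = Real.exp (4 * lam) := by
        rw [hCapp ω, hSapp ω, hS0]
        simp
      rw [hCval]
      have h1 : Real.exp (4 * lam) ^ p ≤ (Real.exp (4 * lam) * K) ^ p := by
        apply Real.rpow_le_rpow (Real.exp_pos _).le ?_ (by linarith)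
        nlinarith [Real.exp_pos (4 * lam)]
      have h3 : (0 : ℝ) ≤ (Real.exp (4 * lam) * K) ^ p := Real.rpow_nonneg (by positivity) p
      have h2 : (Real.exp (4 * lam) * K) ^ p * 1
          ≤ (Real.exp (4 * lam) * K) ^ p * (1 + T ω) :=
        mul_le_mul_of_nonneg_left (by linarith [hTnn ω]) h3
      rw [mul_one] at h2
      linarith
  · -- the a.s. decay estimate
    have hS'fin : ∀ᵐ ω ∂μ, S' ω < ⊤ :=
      (ae_lt_top hT'm hT'fin).mono fun ω h => lt_of_le_of_lt (hS'T' ω) h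
    filter_upwards [hmono, hX0pos, hS'fin, ae_all_iff.2 hXY] with ω hmω hX0ω hSω hXYω
    intro t ht
    set n : ℕ := Nat.floor t with hn
    have hnt : (n : ℝ) ≤ t := Nat.floor_le ht
    have htn : t < n + 1 := Nat.lt_floor_add_one t
    have hXtn : X t ω ≤ X (n : ℝ) ω := hmω (n : ℝ) t hnt
    have hSnnω : 0 ≤ S ω := hSnn ω
    have hX0nn : 0 ≤ X 0 ω := hXnn 0 ω
    have hexppos : (0 : ℝ) < Real.exp (-2 * lam * t) := Real.exp_pos _
    by_cases hmem : ω ∈ A n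
    · have h1 : ENNReal.ofReal (a n) ≤ S' ω := by
        rw [hS'app ω]
        have h2 := ENNReal.le_tsum
          (f := fun k : ℕ => (A k).indicator (fun _ => ENNReal.ofReal (a k)) ω) n
        simpa [Set.indicator_of_mem hmem] using h2
      have h2 : a n ≤ S ω := by
        rw [hSapp ω]
        exact (ENNReal.ofReal_le_iff_le_toReal hSω.ne).1 h1
      have hC : Real.exp (2 * lam * t) ≤ C ω := by
        have h3 : Real.exp (2 * lam * t) ≤ Real.exp (4 * lam) * a n := by
          rw [haapp n, ← Real.exp_add]
          exact Real.exp_le_exp.2 (by nlinarith)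
        have h4 : Real.exp (4 * lam) * a n ≤ Real.exp (4 * lam) * (1 + S ω) :=
          mul_le_mul_of_nonneg_left (by linarith) (Real.exp_pos _).le
        rw [hCapp ω]
        linarith
      have hXt0 : X t ω ≤ X 0 ω := hmω 0 t ht
      have h4 : 1 ≤ C ω * Real.exp (-2 * lam * t) := by
        have he : Real.exp (2 * lam * t) * Real.exp (-2 * lam * t) = 1 := by
          rw [← Real.exp_add]
          have h0 : 2 * lam * t + -2 * lam * t = 0 := by ring
          rw [h0, Real.exp_zero]
        have h5 := mul_le_mul_of_nonneg_right hC hexppos.le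
        rw [he] at h5
        exact h5
      have h6 := mul_le_mul_of_nonneg_right h4 hX0nn
      rw [one_mul] at h6
      linarith
    · have h1 : Y n ω ≤ Real.exp (-(2 * lam) * n) * X 0 ω := not_lt.1 hmem
      have h2 : X (n : ℝ) ω ≤ Real.exp (-(2 * lam) * n) * X 0 ω := by
        rw [hXYω n]; exact h1
      have hC1 : Real.exp (2 * lam) ≤ C ω := by
        have h3 : Real.exp (2 * lam) ≤ Real.exp (4 * lam) :=
          Real.exp_le_exp.2 (by linarith)
        have h4 : Real.exp (4 * lam) * 1 ≤ Real.exp (4 * lam) * (1 + S ω) :=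
          mul_le_mul_of_nonneg_left (by linarith) (Real.exp_pos _).le
        rw [mul_one] at h4
        rw [hCapp ω]
        linarith
      have hee : Real.exp (-(2 * lam) * n) ≤ Real.exp (2 * lam) * Real.exp (-2 * lam * t) := by
        rw [← Real.exp_add]
        exact Real.exp_le_exp.2 (by nlinarith)
      calc X t ω ≤ X (n : ℝ) ω := hXtn
        _ ≤ Real.exp (-(2 * lam) * n) * X 0 ω := h2
        _ ≤ Real.exp (2 * lam) * Real.exp (-2 * lam * t) * X 0 ω :=
            mul_le_mul_of_nonneg_right hee hX0nn
        _ ≤ C ω * Real.exp (-2 * lam * t) * X 0 ω :=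
            mul_le_mul_of_nonneg_right
              (mul_le_mul_of_nonneg_right hC1 hexppos.le) hX0nn
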